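/- arXiv:2311.02606 — 4 statements merged into one kernel-verified Lean document; each statement's English description precedes it below -/
import Mathlib

section
/- The map z ↦ T(z) from ℂ⁵ to rank-3 tensors is an injective ℂ-linear map whose range is exactly the set of rank-3 tensors T satisfying condition T1 (all traces vanish) and T_{ijk} = q·T_{jki} for all indices i,j,k, where q = exp(2πi/3). Consequently, that subspace of tensors has complex dimension 5. -/
open Complex Matrix BigOperators Finset

noncomputable section

/-- The primitive cube root of unity `q = exp(2πi/3)`. -/
def q : ℂ := Complex.exp (2 * Real.pi * Complex.I / 3)

/-- A rank-3 tensor in 3-dimensional space. -/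
abbrev Tensor3 := Fin 3 → Fin 3 → Fin 3 → ℂ

/-- Condition T1: every trace of the tensor vanishes. -/
def CondT1 (T : Tensor3) : Prop :=
  ∀ j : Fin 3, (∑ i, T i i j = 0) ∧ (∑ i, T i j i = 0) ∧ (∑ i, T j i i = 0)

/-- Condition T2: all cyclic sums vanish. -/
def CondT2 (T : Tensor3) : Prop :=
  ∀ i j k : Fin 3, T i j k + T j k i + T k i j = 0

/-- The cyclic permutation operator `Φ_σ` on rank-3 tensors. -/
def Phi (T : Tensor3) : Tensor3 := fun i j k => T j k i

/-- Action of a real 3×3 matrix on a rank-3 tensor. -/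
def gact (g : Matrix (Fin 3) (Fin 3) ℝ) (T : Tensor3) : Tensor3 :=
  fun i j k => ∑ p, ∑ r, ∑ s, (g i p : ℂ) * (g j r : ℂ) * (g k s : ℂ) * T p r s

/-- The tensor `T(z)` associated with a point `z ∈ ℂ⁵`. -/
def Tz (z : Fin 5 → ℂ) : Tensor3 :=
  ![![![0, -(star q) * z 1 / (Real.sqrt 6 : ℂ), (star q) * z 2 / (Real.sqrt 6 : ℂ)],
     ![-q * z 1 / (Real.sqrt 6 : ℂ), z 0 / (Real.sqrt 6 : ℂ), z 3 / (Real.sqrt 3 : ℂ)],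
     ![q * z 2 / (Real.sqrt 6 : ℂ), q * z 4 / (Real.sqrt 3 : ℂ), -(z 0) / (Real.sqrt 6 : ℂ)]],
    ![![-(z 1) / (Real.sqrt 6 : ℂ), q * z 0 / (Real.sqrt 6 : ℂ), (star q) * z 4 / (Real.sqrt 3 : ℂ)],
     ![(star q) * z 0 / (Real.sqrt 6 : ℂ), 0, -(star q) * z 2 / (Real.sqrt 6 : ℂ)],
     ![(star q) * z 3 / (Real.sqrt 3 : ℂ), -q * z 2 / (Real.sqrt 6 : ℂ), z 1 / (Real.sqrt 6 : ℂ)]],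
    ![![z 2 / (Real.sqrt 6 : ℂ), q * z 3 / (Real.sqrt 3 : ℂ), -q * z 0 / (Real.sqrt 6 : ℂ)],
     ![z 4 / (Real.sqrt 3 : ℂ), -(z 2) / (Real.sqrt 6 : ℂ), q * z 1 / (Real.sqrt 6 : ℂ)],
     ![-(star q) * z 0 / (Real.sqrt 6 : ℂ), (star q) * z 1 / (Real.sqrt 6 : ℂ), 0]]]

/-- The matrix `K` of the invariant quadratic form
`K(z,z) = (z¹)² + (z²)² + (z³)² + 2q z⁴ z⁵`. -/
def Kmat : Matrix (Fin 5) (Fin 5) ℂ :=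
  !![1, 0, 0, 0, 0;
     0, 1, 0, 0, 0;
     0, 0, 1, 0, 0;
     0, 0, 0, 0, q;
     0, 0, 0, q, 0]

/-- The matrix `ρ_τ` of the infinitesimal action of `so(3)` on `ℂ⁵`. -/
def rho (τ₁ τ₂ τ₃ : ℝ) : Matrix (Fin 5) (Fin 5) ℂ :=
  !![0, (τ₃ : ℂ), -(τ₂ : ℂ), -(Real.sqrt 2 : ℂ) * τ₁, -(Real.sqrt 2 : ℂ) * q * τ₁;
     -(τ₃ : ℂ), 0, (τ₁ : ℂ), -(Real.sqrt 2 : ℂ) * (star q) * τ₂, -(Real.sqrt 2 : ℂ) * (star q) * τ₂;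
     (τ₂ : ℂ), -(τ₁ : ℂ), 0, -(Real.sqrt 2 : ℂ) * q * τ₃, -(Real.sqrt 2 : ℂ) * τ₃;
     (Real.sqrt 2 : ℂ) * τ₁, (Real.sqrt 2 : ℂ) * q * τ₂, (Real.sqrt 2 : ℂ) * (star q) * τ₃, 0, 0;
     (Real.sqrt 2 : ℂ) * (star q) * τ₁, (Real.sqrt 2 : ℂ) * q * τ₂, (Real.sqrt 2 : ℂ) * τ₃, 0, 0]

/-! The conditions are linear, so they cut out a subspace `W = cyclicTraceless q`. On `W` the
relation `T i j k = q * T j k i` with `q ≠ 1` kills the diagonal and makes the entries on each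
cyclic orbit of an index triple vanish together, while the traces `∑ i, T j i i` give
`T 0 2 2`, `T 1 0 0`, `T 2 1 1` in terms of `T 0 1 1`, `T 1 2 2`, `T 2 0 0`. So a tensor in `W`
is determined by `T 0 1 1`, `T 1 2 2`, `T 2 0 0`, `T 0 1 2`, `T 2 1 0`, and these are the five
coordinates of `z` in `T(z)` up to the factors `1/√6`, `1/√3`. -/

def cyclicTraceless (ω : ℂ) : Submodule ℂ Tensor3 where
  carrier := {T | CondT1 T ∧ ∀ i j k : Fin 3, T i j k = ω * T j k i}
  zero_mem' := by simp [CondT1]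
  add_mem' := by
    rintro S T ⟨hS, hSω⟩ ⟨hT, hTω⟩
    refine ⟨fun j => ?_, fun i j k => ?_⟩
    · simp only [Pi.add_apply, Finset.sum_add_distrib, (hS j).1, (hS j).2.1, (hS j).2.2,
        (hT j).1, (hT j).2.1, (hT j).2.2, add_zero, and_self]
    · simp only [Pi.add_apply, hSω i j k, hTω i j k, mul_add]
  smul_mem' := by
    rintro c T ⟨hT, hTω⟩
    refine ⟨fun j => ?_, fun i j k => ?_⟩
    · simp only [Pi.smul_apply, smul_eq_mul, ← Finset.mul_sum, (hT j).1, (hT j).2.1,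
        (hT j).2.2, mul_zero, and_self]
    · simp only [Pi.smul_apply, smul_eq_mul, hTω i j k, mul_left_comm c]

namespace cyclicTraceless

variable {ω : ℂ} {T T' : Tensor3}

theorem apply_diag_eq_zero (hω : ω ≠ 1) (hT : T ∈ cyclicTraceless ω) (i : Fin 3) :
    T i i i = 0 := by
  have h : (1 - ω) * T i i i = 0 := by linear_combination hT.2 i i i
  exact (mul_eq_zero.mp h).resolve_left (sub_ne_zero.mpr hω.symm)

theorem apply_rotate_eq_zero (hT : T ∈ cyclicTraceless ω) {i j k : Fin 3}
    (h : T i j k = 0) : T k i j = 0 := by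
  rw [hT.2 k i j, h, mul_zero]

theorem eq_zero (hω : ω ≠ 1) (hT : T ∈ cyclicTraceless ω) (h011 : T 0 1 1 = 0)
    (h122 : T 1 2 2 = 0) (h200 : T 2 0 0 = 0) (h012 : T 0 1 2 = 0) (h210 : T 2 1 0 = 0) :
    T = 0 := by
  have hdiag := apply_diag_eq_zero hω hT
  have htrace (j : Fin 3) : T j 0 0 + T j 1 1 + T j 2 2 = 0 := by
    simpa [Fin.sum_univ_three] using (hT.1 j).2.2
  have h022 : T 0 2 2 = 0 := by linear_combination htrace 0 - hdiag 0 - h011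
  have h100 : T 1 0 0 = 0 := by linear_combination htrace 1 - hdiag 1 - h122
  have h211 : T 2 1 1 = 0 := by linear_combination htrace 2 - hdiag 2 - h200
  have h000 := hdiag 0
  have h111 := hdiag 1
  have h222 := hdiag 2
  -- every index triple is a rotation, by at most two steps, of one of the eleven above
  funext i j k
  fin_cases i <;> fin_cases j <;> fin_cases k <;>
    first
    | assumption
    | (apply apply_rotate_eq_zero hT; assumption)
    | (apply apply_rotate_eq_zero hT; apply apply_rotate_eq_zero hT; assumption)

theorem eq_of_apply_eq (hω : ω ≠ 1) (hT : T ∈ cyclicTraceless ω)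
    (hT' : T' ∈ cyclicTraceless ω) (h011 : T 0 1 1 = T' 0 1 1) (h122 : T 1 2 2 = T' 1 2 2)
    (h200 : T 2 0 0 = T' 2 0 0) (h012 : T 0 1 2 = T' 0 1 2) (h210 : T 2 1 0 = T' 2 1 0) :
    T = T' :=
  sub_eq_zero.mp <| eq_zero hω (sub_mem hT hT') (sub_eq_zero.mpr h011) (sub_eq_zero.mpr h122)
    (sub_eq_zero.mpr h200) (sub_eq_zero.mpr h012) (sub_eq_zero.mpr h210)

end cyclicTraceless

theorem q_isPrimitiveRoot : IsPrimitiveRoot q 3 := Complex.isPrimitiveRoot_exp 3 (by norm_num)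

theorem star_q : star q = q ^ 2 := by
  have hnorm : ‖q‖ = 1 := q_isPrimitiveRoot.norm'_eq_one (by norm_num)
  change starRingEnd ℂ q = _
  rw [← RCLike.inv_eq_conj hnorm]
  exact inv_eq_of_mul_eq_one_right (by rw [← pow_succ', q_isPrimitiveRoot.pow_eq_one])

theorem Tz_mem_cyclicTraceless (z : Fin 5 → ℂ) : Tz z ∈ cyclicTraceless q := by
  have hq3 := q_isPrimitiveRoot.pow_eq_one
  refine ⟨fun j => ?_, fun i j k => ?_⟩
  · fin_cases j <;> simp [Fin.sum_univ_three, Tz, neg_div]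
  -- once `star q = q ^ 2` is substituted, each cyclic relation holds modulo `q ^ 3 = 1`
  · fin_cases i <;> fin_cases j <;> fin_cases k <;>
      simp only [Tz, Fin.zero_eta, Fin.mk_one, Fin.reduceFinMk, Matrix.cons_val, star_q] <;> grind

theorem Tz_add (z w : Fin 5 → ℂ) : Tz (z + w) = Tz z + Tz w := by
  funext i j k
  fin_cases i <;> fin_cases j <;> fin_cases k <;>
    simp only [Tz, Fin.zero_eta, Fin.mk_one, Fin.reduceFinMk, Matrix.cons_val, Pi.add_apply] <;>
    ring

theorem Tz_smul (c : ℂ) (z : Fin 5 → ℂ) : Tz (c • z) = c • Tz z := by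
  funext i j k
  fin_cases i <;> fin_cases j <;> fin_cases k <;>
    simp only [Tz, Fin.zero_eta, Fin.mk_one, Fin.reduceFinMk, Matrix.cons_val, Pi.smul_apply,
      smul_eq_mul] <;>
    ring

namespace Tz

def linearMap : (Fin 5 → ℂ) →ₗ[ℂ] Tensor3 where
  toFun := Tz
  map_add' := Tz_add
  map_smul' := Tz_smul

def coords (T : Tensor3) : Fin 5 → ℂ :=
  ![√6 * T 0 1 1, √6 * T 1 2 2, √6 * T 2 0 0, √3 * T 0 1 2, √3 * T 2 1 0]

theorem coords_Tz (z : Fin 5 → ℂ) : coords (Tz z) = z := by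
  funext m
  fin_cases m <;> simp [coords, Tz, mul_div_cancel₀]

theorem Tz_coords {T : Tensor3} (hT : T ∈ cyclicTraceless q) : Tz (coords T) = T := by
  apply cyclicTraceless.eq_of_apply_eq (q_isPrimitiveRoot.ne_one (by norm_num))
    (Tz_mem_cyclicTraceless _) hT <;> simp [coords, Tz]

theorem range_linearMap : LinearMap.range linearMap = cyclicTraceless q := by
  ext T
  exact ⟨by rintro ⟨z, rfl⟩; exact Tz_mem_cyclicTraceless z, fun hT => ⟨_, Tz_coords hT⟩⟩

end Tz

/-- `z ↦ T(z)` is an injective linear map whose range is the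
space of tensors satisfying T1 and `T_{ijk} = q·T_{jki}`, a space of complex
dimension 5. -/
theorem Tz_linear_injective_range :
    ∃ L : (Fin 5 → ℂ) →ₗ[ℂ] Tensor3,
      (∀ z, L z = Tz z) ∧ Function.Injective L ∧
      ((LinearMap.range L : Set Tensor3) =
        {T : Tensor3 | CondT1 T ∧ ∀ i j k : Fin 3, T i j k = q * T j k i}) ∧
      Module.finrank ℂ (LinearMap.range L) = 5 := by
  have hinj : Function.Injective Tz.linearMap := Function.LeftInverse.injective Tz.coords_Tz
  refine ⟨Tz.linearMap, fun _ => rfl, hinj, by rw [Tz.range_linearMap]; rfl, ?_⟩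
  rw [LinearMap.finrank_range_of_inj hinj, Module.finrank_fin_fun]

end
end

section
/- For all z, w ∈ ℂ⁵, one has Σ_{i,j,k} T(z)_{ijk} · conj(T(w)_{ijk}) = Σ_{A=1}^{5} z^A · conj(w^A). In other words, the map z ↦ T(z) is an isometry of ℂ⁵ with its canonical Hermitian inner product onto its image equipped with the Hermitian pairing h(T,S) = Σ_{ijk} T_{ijk} · conj(S_{ijk}). -/
open Complex Matrix BigOperators Finset

noncomputable section

set_option maxHeartbeats 2000000 in
/-- `z ↦ T(z)` is a Hermitian isometry: the Hermitian pairing of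
`T(z)` and `T(w)` equals the canonical Hermitian pairing of `z` and `w`. -/
theorem Tz_hermitian_isometry (z w : Fin 5 → ℂ) :
    ∑ i, ∑ j, ∑ k, Tz z i j k * star (Tz w i j k) = ∑ A, z A * star (w A) := by
  have hq : q * star q = 1 := by
    rw [Complex.star_def, Complex.mul_conj]
    norm_cast
    rw [Complex.normSq_eq_norm_sq, q, Complex.norm_exp]
    norm_num
  have h6 : ((Real.sqrt 6 : ℂ)) * ((Real.sqrt 6 : ℂ)) = 6 := by
    rw [← Complex.ofReal_mul, Real.mul_self_sqrt (by norm_num)]; norm_num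
  have h3 : ((Real.sqrt 3 : ℂ)) * ((Real.sqrt 3 : ℂ)) = 3 := by
    rw [← Complex.ofReal_mul, Real.mul_self_sqrt (by norm_num)]; norm_num
  have h6ne : (Real.sqrt 6 : ℂ) ≠ 0 := by
    simp [Real.sqrt_eq_zero']
  have h3ne : (Real.sqrt 3 : ℂ) ≠ 0 := by
    simp [Real.sqrt_eq_zero']
  have hs6 : star ((Real.sqrt 6 : ℂ)) = (Real.sqrt 6 : ℂ) := by
    simp [Complex.star_def]
  have hs3 : star ((Real.sqrt 3 : ℂ)) = (Real.sqrt 3 : ℂ) := by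
    simp [Complex.star_def]
  have e6 : ((Real.sqrt 6 : ℂ))⁻¹ = (Real.sqrt 6 : ℂ) / 6 := by
    rw [eq_div_iff (by norm_num), inv_mul_eq_div, div_eq_iff h6ne, h6]
  have e3 : ((Real.sqrt 3 : ℂ))⁻¹ = (Real.sqrt 3 : ℂ) / 3 := by
    rw [eq_div_iff (by norm_num), inv_mul_eq_div, div_eq_iff h3ne, h3]
  simp only [Tz, Fin.sum_univ_three, Fin.sum_univ_five, Matrix.cons_val_zero,
    Matrix.cons_val_one, Matrix.head_cons, Matrix.cons_val_two, Matrix.tail_cons,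
    star_div₀, star_mul', star_neg, star_star, star_zero, hs6, hs3, star_inv₀, star_ofNat, div_eq_mul_inv, e6, e3]
  linear_combination
    ((z 0 * star (w 0) + z 1 * star (w 1) + z 2 * star (w 2)) * ((2 + 4 * q * star q) / 36)) * h6
    + ((z 3 * star (w 3) + z 4 * star (w 4)) * ((1 + 2 * q * star q) / 9)) * h3
    + ((z 0 * star (w 0) + z 1 * star (w 1) + z 2 * star (w 2)
        + z 3 * star (w 3) + z 4 * star (w 4)) * (2 / 3)) * hq

end
end

section
/- For every z ∈ ℂ⁵, the quadratic invariant I₂ = Σ_{i,j,k} T(z)_{ijk} · T(z)_{ikj} equals (z¹)² + (z²)² + (z³)² + 2q·z⁴·z⁵, where q = exp(2πi/3). -/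
open Complex Matrix BigOperators Finset

noncomputable section

/-! Each of the 27 products `T_{ijk} T_{ikj}` is a monomial in `z`: the squares `(zᵃ)²` for
`a = 1, 2, 3` each arise six times with weight `1/6`, the phases cancelling as `q q̄ = 1`, and
`z⁴ z⁵` arises six times with weight `q/3`, using `q̄² = q`. Both facts follow from `q̄ = q²`
and `q³ = 1`. -/

theorem q_pow_three : q ^ 3 = 1 := by
  simpa [q] using (Complex.isPrimitiveRoot_exp 3 three_ne_zero).pow_eq_one

theorem Complex.star_eq_pow_pred_of_pow_eq_one {ζ : ℂ} {n : ℕ} (h : ζ ^ n = 1) (hn : n ≠ 0) :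
    star ζ = ζ ^ (n - 1) := by
  have hζ : ζ ≠ 0 := by rintro rfl; simp [zero_pow hn] at h
  rw [Complex.star_def, ← Complex.inv_eq_conj (Complex.norm_eq_one_of_pow_eq_one h hn), eq_comm,
    pow_sub₀ ζ hζ (Nat.one_le_iff_ne_zero.mpr hn), h, one_mul, pow_one]

theorem Complex.ofReal_sqrt_sq {x : ℝ} (hx : 0 ≤ x) : ((√x : ℝ) : ℂ) ^ 2 = x := by
  rw [← Complex.ofReal_pow, Real.sq_sqrt hx]

/-- The invariant `I₂ = Σ T_{ijk}T_{ikj}` evaluated on `T(z)`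
equals `(z¹)² + (z²)² + (z³)² + 2q z⁴ z⁵`. -/
theorem Tz_invariant_I2 (z : Fin 5 → ℂ) :
    ∑ i, ∑ j, ∑ k, Tz z i j k * Tz z i k j =
      (z 0)^2 + (z 1)^2 + (z 2)^2 + 2 * q * z 3 * z 4 := by
  have h6 : ((√6 : ℝ) : ℂ) ^ 2 = 6 := by exact_mod_cast Complex.ofReal_sqrt_sq (by norm_num)
  have h3 : ((√3 : ℝ) : ℂ) ^ 2 = 3 := by exact_mod_cast Complex.ofReal_sqrt_sq (by norm_num)
  simp only [Tz, star_q, Fin.sum_univ_three, Matrix.cons_val_zero, Matrix.cons_val_one,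
    Matrix.cons_val_two, Matrix.head_cons, Matrix.tail_cons]
  field_simp
  rw [h6, h3]
  linear_combination 12 * (z 0 ^ 2 + z 1 ^ 2 + z 2 ^ 2 + q * z 3 * z 4) * q_pow_three

end
end

section
/- For all real numbers τ₁, τ₂, τ₃ and all z ∈ ℂ⁵, let τ be the real skew-symmetric 3×3 matrix with rows (0, −τ₃, τ₂), (τ₃, 0, −τ₁), (−τ₂, τ₁, 0). Then the rank-3 tensor S defined by S_{ijk} = Σ_p τ_{ip}·T(z)_{pjk} + Σ_r τ_{jr}·T(z)_{irk} + Σ_s τ_{ks}·T(z)_{ijs} equals T(ρ_τ·z), where ρ_τ·z denotes the matrix–vector product. That is, the infinitesimal rotation action on the tensor T(z) corresponds under the identification z ↦ T(z) to the linear map ρ_τ on ℂ⁵. -/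
open Complex Matrix BigOperators Finset

noncomputable section

lemma cons_val_three' {α : Type*} {m : ℕ} (x : α) (u : Fin (m+3) → α) :
    Matrix.vecCons x u 3 = Matrix.vecHead (Matrix.vecTail (Matrix.vecTail u)) := rfl

lemma cons_val_four' {α : Type*} {m : ℕ} (x : α) (u : Fin (m+4) → α) :
    Matrix.vecCons x u 4 = Matrix.vecHead (Matrix.vecTail (Matrix.vecTail (Matrix.vecTail u))) := rfl

lemma q_eq : q = (-1 + Real.sqrt 3 * Complex.I)/2 := by
  have h : (2 * Real.pi * Complex.I / 3 : ℂ) = ((2*Real.pi/3 : ℝ) : ℂ) * Complex.I := by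
    push_cast; ring
  rw [q, h, Complex.exp_mul_I, ← Complex.ofReal_cos, ← Complex.ofReal_sin]
  have hc : Real.cos (2*Real.pi/3) = -(1/2) := by
    rw [show 2*Real.pi/3 = Real.pi - Real.pi/3 by ring, Real.cos_pi_sub, Real.cos_pi_div_three]
  have hs : Real.sin (2*Real.pi/3) = Real.sqrt 3 / 2 := by
    rw [show 2*Real.pi/3 = Real.pi - Real.pi/3 by ring, Real.sin_pi_sub, Real.sin_pi_div_three]
  rw [hc, hs]; push_cast; ring

lemma star_q_eq : star q = (-1 - Real.sqrt 3 * Complex.I)/2 := by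
  rw [q_eq, Complex.star_def]
  rw [Complex.ext_iff]
  constructor <;>
    simp [Complex.div_re, Complex.div_im, Complex.normSq, Complex.add_re, Complex.add_im] <;> ring

set_option maxHeartbeats 2000000 in
/-- The infinitesimal rotation action on `T(z)` corresponds,
under the identification `z ↦ T(z)`, to the linear map `ρ_τ` on `ℂ⁵`. -/
theorem infinitesimal_action_eq_rho (τ₁ τ₂ τ₃ : ℝ) (z : Fin 5 → ℂ) :
    ∀ i j k : Fin 3,
      (∑ p, ((!![0, -τ₃, τ₂; τ₃, 0, -τ₁; -τ₂, τ₁, 0] : Matrix (Fin 3) (Fin 3) ℝ) i p : ℂ)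
          * Tz z p j k) +
      (∑ r, ((!![0, -τ₃, τ₂; τ₃, 0, -τ₁; -τ₂, τ₁, 0] : Matrix (Fin 3) (Fin 3) ℝ) j r : ℂ)
          * Tz z i r k) +
      (∑ s, ((!![0, -τ₃, τ₂; τ₃, 0, -τ₁; -τ₂, τ₁, 0] : Matrix (Fin 3) (Fin 3) ℝ) k s : ℂ)
          * Tz z i j s) =
      Tz (rho τ₁ τ₂ τ₃ *ᵥ z) i j k := by
  
  have hq := q_eq
  have hqs := star_q_eq
  have h6 : (Real.sqrt 6 : ℂ) = (Real.sqrt 2 : ℂ) * (Real.sqrt 3 : ℂ) := by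
    rw [show (6:ℝ) = 2*3 by norm_num, Real.sqrt_mul (by norm_num)]; push_cast; ring
  have h2 : (Real.sqrt 2 : ℂ)^2 = 2 := by
    rw [← Complex.ofReal_pow, Real.sq_sqrt (by norm_num)]; norm_num
  have h3 : (Real.sqrt 3 : ℂ)^2 = 3 := by
    rw [← Complex.ofReal_pow, Real.sq_sqrt (by norm_num)]; norm_num
  have h2c : (Real.sqrt 2 : ℂ)^3 = 2 * Real.sqrt 2 := by rw [pow_succ, h2]
  have h3c : (Real.sqrt 3 : ℂ)^3 = 3 * Real.sqrt 3 := by rw [pow_succ, h3]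
  have h2n : (Real.sqrt 2 : ℝ) ≠ 0 := by positivity
  have h3n : (Real.sqrt 3 : ℝ) ≠ 0 := by positivity
  have h2i : (Real.sqrt 2 : ℂ)⁻¹ = Real.sqrt 2 * (2:ℂ)⁻¹ := by
    rw [inv_eq_iff_eq_inv, eq_comm, inv_eq_iff_eq_inv]
    field_simp
    rw [← h2]
  have h3i : (Real.sqrt 3 : ℂ)⁻¹ = Real.sqrt 3 * (3:ℂ)⁻¹ := by
    rw [inv_eq_iff_eq_inv, eq_comm, inv_eq_iff_eq_inv]
    field_simp
    rw [← h3]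
  intro i j k
  fin_cases i <;> fin_cases j <;> fin_cases k <;>
  · simp only [Fin.zero_eta, Fin.mk_one, Fin.reduceFinMk, Fin.isValue]
    simp only [Tz, rho, mulVec, dotProduct, hqs]
    simp only [hq, h6, Fin.sum_univ_five, Fin.sum_univ_three,
      Matrix.cons_val', Matrix.cons_val_zero, Matrix.cons_val_one, Matrix.head_cons,
      Matrix.cons_val_two, cons_val_three', cons_val_four',
      Matrix.empty_val', Matrix.cons_val_fin_one, Matrix.head_fin_const,
      Matrix.tail_cons, Matrix.of_apply, Fin.isValue, div_eq_mul_inv, mul_inv, h2i, h3i]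
    push_cast
    ring_nf
    try simp only [Complex.I_sq, h2, h3, h2c, h3c]
    try ring

end
end
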